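/- Let G be a finite bipartite graph with left vertex set U of size m ≥ 1 and right vertex set V of size n ≥ 1, with no isolated vertices, and let k be an even positive integer. Then the number |𝒫_k| of walks of length k in G (where edges may be repeated) satisfies |𝒫_k| ≥ |E(G)|^k / ( (mn)^{(k/2)-1} · min{m, n} ). -/

import Mathlib

/-!
Write `A` for the adjacency matrix and `𝟙` for the all-ones vector, so that `|𝒫_j| = 𝟙ᵀ Aʲ 𝟙`.
Since `A` is symmetric, `|𝒫_{2j}| = ‖Aʲ 𝟙‖²`, and Cauchy–Schwarz makes `j ↦ |𝒫_{2j}|` log-convex;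
hence `|𝒫_{2l}| / (m + n) ≥ (|𝒫_2| / (m + n))ˡ`. Cauchy–Schwarz on the degrees gives
`|𝒫_2| = ∑ deg² ≥ |E|²/m + |E|²/n`, and the remaining loss is `mn = min · max ≤ min · (m + n)`.
-/

/-- The bipartite graph on `U ⊕ V` determined by the relation `R : U → V → Prop`:
a left vertex `u` is adjacent to a right vertex `v` iff `R u v`, and there are no
edges within `U` or within `V`. -/
def bipGraph {U V : Type*} (R : U → V → Prop) : SimpleGraph (U ⊕ V) where
  Adj x y :=
    Sum.elim (fun u => Sum.elim (fun _ => False) (fun v => R u v))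
      (fun v => Sum.elim (fun u => R u v) (fun _ => False)) x y
  symm := ⟨by rintro (u | v) (u' | v') h <;> simp_all⟩
  loopless := ⟨by rintro (u | v) h <;> exact h⟩

/-- The degree of the left vertex `u`. -/
def degL {U V : Type*} [Fintype V] (R : U → V → Prop) [∀ u v, Decidable (R u v)] (u : U) : ℕ :=
  (Finset.univ.filter fun v => R u v).card

/-- The degree of the right vertex `v`. -/
def degR {U V : Type*} [Fintype U] (R : U → V → Prop) [∀ u v, Decidable (R u v)] (v : V) : ℕ :=
  (Finset.univ.filter fun u => R u v).card

/-- The number of edges of the bipartite graph. -/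
def edgeCount {U V : Type*} [Fintype U] [Fintype V] (R : U → V → Prop)
    [∀ u v, Decidable (R u v)] : ℕ :=
  (Finset.univ.filter fun p : U × V => R p.1 p.2).card

/-- The number of walks of length `k` in the bipartite graph (sequences of `k + 1`
vertices, each adjacent to the next; vertices and edges may be repeated). -/
noncomputable def walkCount {U V : Type*} [Fintype U] [Fintype V]
    (R : U → V → Prop) (k : ℕ) : ℕ :=
  ∑ x : U ⊕ V, ∑ y : U ⊕ V, Nat.card {w : (bipGraph R).Walk x y // w.length = k}

/-- The Shannon entropy (in nats) of a probability mass function `p` on a finite set,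
with the convention `0 · log 0 = 0` (automatic in Lean since `Real.log 0 = 0`). -/
noncomputable def entPMF {α : Type*} [Fintype α] (p : α → ℝ) : ℝ :=
  -∑ a, p a * Real.log (p a)

open Matrix Finset

theorem div_pow_le_div_of_sq_le_mul {K : Type*} [Field K] [LinearOrder K] [IsStrictOrderedRing K]
    {F : ℕ → K} (h0 : 0 < F 0) (h1 : 0 < F 1) (hF : ∀ j, F (j + 1) ^ 2 ≤ F j * F (j + 2))
    (l : ℕ) : (F 1 / F 0) ^ l ≤ F l / F 0 := by
  have hpos : ∀ j, 0 < F j ∧ 0 < F (j + 1) := by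
    intro j
    induction j with
    | zero => exact ⟨h0, h1⟩
    | succ j ih =>
      exact ⟨ih.2, pos_of_mul_pos_right ((pow_pos ih.2 2).trans_le (hF j)) ih.1.le⟩
  have hr : Monotone fun j => F (j + 1) / F j := monotone_nat_of_le_succ fun j => by
    rw [div_le_div_iff₀ (hpos j).1 (hpos (j + 1)).1, ← sq, mul_comm]
    exact hF j
  have htel : ∀ l, F l / F 0 = ∏ j ∈ range l, F (j + 1) / F j := by
    intro l
    induction l with
    | zero => simp [h0.ne']
    | succ l ih =>
      rw [prod_range_succ, ← ih, div_mul_div_cancel₀' (hpos l).1.ne']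
  calc (F 1 / F 0) ^ l = ∏ _j ∈ range l, F 1 / F 0 := by rw [prod_const, card_range]
    _ ≤ ∏ j ∈ range l, F (j + 1) / F j :=
      prod_le_prod (fun _ _ => div_nonneg (hpos 0).2.le h0.le) fun j _ => hr (Nat.zero_le j)
    _ = F l / F 0 := (htel l).symm

namespace Matrix.IsSymm

variable {ι R : Type*} [Fintype ι] [DecidableEq ι] {A : Matrix ι ι R}

theorem dotProduct_pow_add_mulVec [CommSemiring R] (hA : A.IsSymm) (v : ι → R) (a b : ℕ) :
    v ⬝ᵥ (A ^ (a + b) *ᵥ v) = (A ^ a *ᵥ v) ⬝ᵥ (A ^ b *ᵥ v) := by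
  rw [pow_add, ← mulVec_mulVec, dotProduct_mulVec, ← mulVec_transpose, transpose_pow, hA.eq]

theorem dotProduct_pow_add_mulVec_sq_le [CommRing R] [LinearOrder R] [IsStrictOrderedRing R]
    (hA : A.IsSymm) (v : ι → R) (a b : ℕ) :
    (v ⬝ᵥ (A ^ (a + b) *ᵥ v)) ^ 2 ≤ (v ⬝ᵥ (A ^ (a + a) *ᵥ v)) * (v ⬝ᵥ (A ^ (b + b) *ᵥ v)) := by
  rw [hA.dotProduct_pow_add_mulVec, hA.dotProduct_pow_add_mulVec, hA.dotProduct_pow_add_mulVec]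
  simpa only [dotProduct, sq] using sum_mul_sq_le_sq_mul_sq univ (A ^ a *ᵥ v) (A ^ b *ᵥ v)

theorem dotProduct_sq_mulVec_div_pow_le [Field R] [LinearOrder R] [IsStrictOrderedRing R]
    (hA : A.IsSymm) {v : ι → R} (h0 : 0 < v ⬝ᵥ v) (h1 : 0 < v ⬝ᵥ (A ^ 2 *ᵥ v)) (l : ℕ) :
    (v ⬝ᵥ (A ^ 2 *ᵥ v) / v ⬝ᵥ v) ^ l ≤ v ⬝ᵥ (A ^ (2 * l) *ᵥ v) / v ⬝ᵥ v := by
  have key := div_pow_le_div_of_sq_le_mul (F := fun j => v ⬝ᵥ (A ^ (2 * j) *ᵥ v))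
    (by simpa using h0) (by simpa using h1) (fun j => by
      simpa only [two_mul, show j + (j + 2) = j + 1 + (j + 1) by ring]
        using hA.dotProduct_pow_add_mulVec_sq_le v j (j + 2)) l
  simpa using key

end Matrix.IsSymm

section Bipartite

variable {U V : Type*} [Fintype U] [Fintype V] (R : U → V → Prop) [∀ u v, Decidable (R u v)]

instance : DecidableRel (bipGraph R).Adj
  | .inl _, .inl _ => .isFalse id
  | .inl u, .inr v => inferInstanceAs (Decidable (R u v))
  | .inr v, .inl u => inferInstanceAs (Decidable (R u v))
  | .inr _, .inr _ => .isFalse id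

theorem neighborFinset_bipGraph_inl (u : U) :
    (bipGraph R).neighborFinset (.inl u) = (univ.filter (R u)).map .inr := by
  ext (u' | v) <;> rw [SimpleGraph.mem_neighborFinset] <;> simp [bipGraph]

theorem neighborFinset_bipGraph_inr (v : V) :
    (bipGraph R).neighborFinset (.inr v) = (univ.filter (R · v)).map .inl := by
  ext (u | v') <;> rw [SimpleGraph.mem_neighborFinset] <;> simp [bipGraph]

theorem degree_bipGraph_inl (u : U) : (bipGraph R).degree (.inl u) = degL R u := by
  rw [← SimpleGraph.card_neighborFinset_eq_degree, neighborFinset_bipGraph_inl, card_map, degL]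

theorem degree_bipGraph_inr (v : V) : (bipGraph R).degree (.inr v) = degR R v := by
  rw [← SimpleGraph.card_neighborFinset_eq_degree, neighborFinset_bipGraph_inr, card_map, degR]

theorem sum_degL : ∑ u, degL R u = edgeCount R := by
  rw [edgeCount, card_filter, Fintype.sum_prod_type]
  exact sum_congr rfl fun u _ => by rw [degL, card_filter]

theorem sum_degR : ∑ v, degR R v = edgeCount R := by
  rw [edgeCount, card_filter, Fintype.sum_prod_type_right]
  exact sum_congr rfl fun v _ => by rw [degR, card_filter]

theorem edgeCount_sq_le_card_mul_sum_degL_sq :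
    (edgeCount R : ℝ) ^ 2 ≤ Fintype.card U * ∑ u, (degL R u : ℝ) ^ 2 := by
  simpa [← sum_degL R] using sq_sum_le_card_mul_sum_sq (s := univ) (f := fun u => (degL R u : ℝ))

theorem edgeCount_sq_le_card_mul_sum_degR_sq :
    (edgeCount R : ℝ) ^ 2 ≤ Fintype.card V * ∑ v, (degR R v : ℝ) ^ 2 := by
  simpa [← sum_degR R] using sq_sum_le_card_mul_sum_sq (s := univ) (f := fun v => (degR R v : ℝ))

theorem walkCount_eq_dotProduct [DecidableEq U] [DecidableEq V] (k : ℕ) :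
    (walkCount R k : ℝ) = 1 ⬝ᵥ ((bipGraph R).adjMatrix ℝ ^ k *ᵥ 1) := by
  simp only [walkCount, dotProduct, mulVec, Pi.one_apply, one_mul, mul_one, Nat.cast_sum,
    SimpleGraph.adjMatrix_pow_apply_eq_card_walk, Nat.card_eq_fintype_card]
  rfl

theorem walkCount_two :
    (walkCount R 2 : ℝ) = ∑ u, (degL R u : ℝ) ^ 2 + ∑ v, (degR R v : ℝ) ^ 2 := by
  classical
  rw [walkCount_eq_dotProduct, (SimpleGraph.isSymm_adjMatrix _).dotProduct_pow_add_mulVec 1 1 1,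
    pow_one, dotProduct, Fintype.sum_sum_type]
  simp [degree_bipGraph_inl, degree_bipGraph_inr, sq]

theorem edgeCount_sq_div_add_le_walkCount_two :
    (edgeCount R : ℝ) ^ 2 / Fintype.card U + (edgeCount R : ℝ) ^ 2 / Fintype.card V ≤
      walkCount R 2 := by
  rw [walkCount_two]
  gcongr
  · exact div_le_of_le_mul₀ (by positivity) (by positivity)
      ((edgeCount_sq_le_card_mul_sum_degL_sq R).trans_eq (mul_comm _ _))
  · exact div_le_of_le_mul₀ (by positivity) (by positivity)
      ((edgeCount_sq_le_card_mul_sum_degR_sq R).trans_eq (mul_comm _ _))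

theorem walkCount_two_div_card_pow_le (hUV : 0 < Fintype.card U + Fintype.card V)
    (h2 : 0 < walkCount R 2) (l : ℕ) :
    ((walkCount R 2 : ℝ) / (Fintype.card U + Fintype.card V)) ^ l ≤
      walkCount R (2 * l) / (Fintype.card U + Fintype.card V) := by
  classical
  have hsize : (1 : U ⊕ V → ℝ) ⬝ᵥ 1 = Fintype.card U + Fintype.card V := by simp [dotProduct]
  rw [← Nat.cast_pos (α := ℝ), walkCount_eq_dotProduct] at h2
  rw [walkCount_eq_dotProduct, walkCount_eq_dotProduct, ← hsize]
  exact (SimpleGraph.isSymm_adjMatrix _).dotProduct_sq_mulVec_div_pow_le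
    (by rw [hsize]; exact_mod_cast hUV) h2 l

end Bipartite

theorem pow_div_pow_sub_one_mul_min_le {E m n : ℝ} (hm : 0 < m) (hn : 0 < n) {l : ℕ}
    (hl : l ≠ 0) :
    E ^ (2 * l) / ((m * n) ^ (l - 1) * min m n) ≤
      (m + n) * ((E ^ 2 / m + E ^ 2 / n) / (m + n)) ^ l :=
  calc E ^ (2 * l) / ((m * n) ^ (l - 1) * min m n)
      = (E ^ 2 / (m * n)) ^ l * max m n := by
        rw [div_pow, ← pow_mul, ← min_mul_max m n]
        field_simp [(lt_min hm hn).ne', (lt_max_of_lt_left hm).ne']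
        rw [← pow_sub_one_mul hl]
        ring
    _ ≤ (E ^ 2 / (m * n)) ^ l * (m + n) := by
        gcongr
        exact max_le_add_of_nonneg hm.le hn.le
    _ = (m + n) * ((E ^ 2 / m + E ^ 2 / n) / (m + n)) ^ l := by
        rw [mul_comm]
        congr 2
        field_simp
        ring

theorem walks_cardinality_lower_bound_even_general {U V : Type*} [Fintype U] [Fintype V]
    (R : U → V → Prop) [∀ u v, Decidable (R u v)]
    (k : ℕ) (hk0 : 0 < k) (hk : Even k) :
    (edgeCount R : ℝ) ^ k /
        (((Fintype.card U * Fintype.card V : ℕ) : ℝ) ^ (k / 2 - 1) *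
          ((min (Fintype.card U) (Fintype.card V) : ℕ) : ℝ))
      ≤ (walkCount R k : ℝ) := by
  obtain ⟨l, rfl⟩ := hk
  rcases (edgeCount R).eq_zero_or_pos with hE | hE
  · simp [hE, zero_pow hk0.ne']
  obtain ⟨⟨u, v⟩, -⟩ := card_pos.mp hE
  have hU := Fintype.card_pos_iff.mpr ⟨u⟩
  have hV := Fintype.card_pos_iff.mpr ⟨v⟩
  have hdeg := edgeCount_sq_div_add_le_walkCount_two R
  have hwalk2 : 0 < walkCount R 2 := by
    exact_mod_cast hdeg.trans_lt' (by positivity : (0 : ℝ) < _)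
  have hmoment := walkCount_two_div_card_pow_le R (by omega) hwalk2 l
  rw [← two_mul, Nat.mul_div_cancel_left _ two_pos]
  push_cast
  set m : ℝ := (Fintype.card U : ℝ)
  set n : ℝ := (Fintype.card V : ℝ)
  set E : ℝ := (edgeCount R : ℝ)
  calc E ^ (2 * l) / ((m * n) ^ (l - 1) * min m n)
      ≤ (m + n) * ((E ^ 2 / m + E ^ 2 / n) / (m + n)) ^ l :=
        pow_div_pow_sub_one_mul_min_le (by positivity) (by positivity) (by omega)
    _ ≤ (m + n) * (walkCount R 2 / (m + n)) ^ l := by gcongr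
    _ ≤ walkCount R (2 * l) := (le_div_iff₀' (by positivity)).mp hmoment

/-- Lower bound on the number of walks of even length `k` in a finite bipartite graph
with sides of sizes `m, n ≥ 1` and no isolated vertices:
`|𝒫_k| ≥ |E(G)|^k / ((m·n)^(k/2 - 1) · min{m, n})`. -/
theorem walks_cardinality_lower_bound_even {U V : Type*} [Fintype U] [Fintype V]
    (R : U → V → Prop) [∀ u v, Decidable (R u v)]
    (hU : 0 < Fintype.card U) (hV : 0 < Fintype.card V)
    (hisoL : ∀ u : U, ∃ v : V, R u v) (hisoR : ∀ v : V, ∃ u : U, R u v)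
    (k : ℕ) (hk0 : 0 < k) (hk : Even k) :
    (edgeCount R : ℝ) ^ k /
        (((Fintype.card U * Fintype.card V : ℕ) : ℝ) ^ (k / 2 - 1) *
          ((min (Fintype.card U) (Fintype.card V) : ℕ) : ℝ))
      ≤ (walkCount R k : ℝ) :=
  walks_cardinality_lower_bound_even_general R k hk0 hk
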